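/- Second intermediate identity in the proof of Lemma 6: under the outcome model, the treatment model, IV independence, and the orthogonality conditions (Assumption 2(c), unconditional form), it holds that E[(A − E[A|B])·Y] = E[A·(A − E[A|B])]·E[ϑ_a(V)] + E[B·A·(A − E[A|B])]·E[ϑ_az(V)] + Cov(α_u(V), ϑ_u(V)). -/

import Mathlib

/-!
Write `W = E[A | B]` and `D = A - W`. Since `D` is `σ(V, A, B)`-measurable, `E[D Y]` may be
computed with `Y` replaced by the outcome model, which splits it into terms `E[ϑ(V) X]` with
`X = A D, B D, B A D, D`. Each such `X` is `G A + K` with `G, K` functions of `B` (for `A D` and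
`B A D` this uses `A² = A`), and conditioning on `(B, V)` and then using `B ⫫ V` gives
`E[ϑ(V) X] = E[ϑ(V)] E[X] + Cov(ϑ, αz) E[G B] + Cov(ϑ, αu) E[G]`.
The orthogonality conditions remove every covariance term except `Cov(ϑu, αu)`, and
`E[G D] = 0` for `G` a function of `B` removes the `ϑz` term and `E[ϑu] E[D]`.
-/

open MeasureTheory ProbabilityTheory

/-- Covariance of two real random variables: `Cov(X,Z) = E[XZ] - E[X]·E[Z]`. -/
noncomputable def covE {Ω : Type*} [MeasurableSpace Ω] (μ : Measure Ω) (X Z : Ω → ℝ) : ℝ :=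
  (∫ ω, X ω * Z ω ∂μ) - (∫ ω, X ω ∂μ) * (∫ ω, Z ω ∂μ)

theorem covE_comm {Ω : Type*} [MeasurableSpace Ω] (μ : Measure Ω) (X Z : Ω → ℝ) :
    covE μ X Z = covE μ Z X := by
  simp only [covE, mul_comm]

theorem memLp_top_of_binary {Ω : Type*} [MeasurableSpace Ω] {μ : Measure Ω} {A : Ω → ℝ}
    (hA : Measurable A) (h01 : ∀ ω, A ω = 0 ∨ A ω = 1) : MemLp A ⊤ μ :=
  memLp_top_of_bound hA.aestronglyMeasurable 1 <| ae_of_all _ fun ω => by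
    rcases h01 ω with h | h <;> simp [h]

theorem memLp_top_comp_of_bound {Ω 𝒱 : Type*} [MeasurableSpace Ω] [MeasurableSpace 𝒱]
    {μ : Measure Ω} {V : Ω → 𝒱} {θ : 𝒱 → ℝ} (hV : Measurable V) (hθ : Measurable θ)
    (hθb : ∃ C, ∀ x, |θ x| ≤ C) : MemLp (fun ω => θ (V ω)) ⊤ μ := by
  obtain ⟨C, hC⟩ := hθb
  exact memLp_top_of_bound (hθ.comp hV).aestronglyMeasurable C (ae_of_all _ fun ω => hC (V ω))

theorem integral_mul_eq_of_condExp_ae_eq {Ω : Type*} {m m₀ : MeasurableSpace Ω}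
    {μ : Measure Ω} [IsFiniteMeasure μ] (hm : m ≤ m₀) {f g h : Ω → ℝ}
    (hg : StronglyMeasurable[m] g) (hgf : Integrable (fun ω => g ω * f ω) μ)
    (hf : Integrable f μ) (hfh : μ[f|m] =ᵐ[μ] h) :
    ∫ ω, g ω * f ω ∂μ = ∫ ω, g ω * h ω ∂μ := by
  rw [← integral_condExp hm]
  refine integral_congr_ae ?_
  filter_upwards [condExp_mul_of_stronglyMeasurable_left hg hgf hf, hfh] with ω h₁ h₂
  exact h₁.trans (by rw [Pi.mul_apply, h₂])

theorem integral_mul_sub_condExp_eq_zero {Ω : Type*} {m m₀ : MeasurableSpace Ω}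
    {μ : Measure Ω} [IsFiniteMeasure μ] (hm : m ≤ m₀) {f g : Ω → ℝ}
    (hg : StronglyMeasurable[m] g) (hgf : Integrable (fun ω => g ω * f ω) μ)
    (hf : Integrable f μ) (hgc : Integrable (fun ω => g ω * μ[f|m] ω) μ) :
    ∫ ω, g ω * (f ω - μ[f|m] ω) ∂μ = 0 := by
  simp_rw [mul_sub]
  rw [integral_sub hgf hgc, integral_mul_eq_of_condExp_ae_eq hm hg hgf hf Filter.EventuallyEq.rfl,
    sub_self]

theorem ProbabilityTheory.IndepFun.integral_mul_of_measurable_comap {Ω β γ : Type*}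
    [MeasurableSpace Ω] [MeasurableSpace β] [MeasurableSpace γ] {μ : Measure Ω}
    {X : Ω → β} {Z : Ω → γ} (h : IndepFun X Z μ) (hX : Measurable X) (hZ : Measurable Z)
    {f g : Ω → ℝ} (hf : Measurable[MeasurableSpace.comap X inferInstance] f)
    (hg : Measurable[MeasurableSpace.comap Z inferInstance] g) :
    ∫ ω, f ω * g ω ∂μ = (∫ ω, f ω ∂μ) * ∫ ω, g ω ∂μ := by
  have hfg : IndepFun f g μ := (IndepFun_iff_Indep _ _ _).2 <|
    indep_of_indep_of_le ((IndepFun_iff_Indep _ _ _).1 h) hf.comap_le hg.comap_le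
  exact hfg.integral_mul_eq_mul_integral (hf.mono hX.comap_le le_rfl).aestronglyMeasurable
    (hg.mono hZ.comap_le le_rfl).aestronglyMeasurable

theorem integral_sub_mul_eq_of_condExp_outcome {Ω 𝒱 : Type*} [MeasurableSpace Ω]
    [MeasurableSpace 𝒱] {μ : Measure Ω} [IsFiniteMeasure μ] {V : Ω → 𝒱} {A B W Y : Ω → ℝ}
    {ϑa ϑz ϑaz ϑu : 𝒱 → ℝ} (hV : Measurable V) (hA : Measurable A) (hB : Measurable B)
    (hAb : MemLp A ⊤ μ) (hBb : MemLp B ⊤ μ)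
    (hϑa : MemLp (fun ω => ϑa (V ω)) ⊤ μ) (hϑz : MemLp (fun ω => ϑz (V ω)) ⊤ μ)
    (hϑaz : MemLp (fun ω => ϑaz (V ω)) ⊤ μ) (hϑu : MemLp (fun ω => ϑu (V ω)) ⊤ μ)
    (hW : StronglyMeasurable[MeasurableSpace.comap B inferInstance] W) (hWb : MemLp W ⊤ μ)
    (hY : Integrable Y μ)
    (houtcome : μ[Y | MeasurableSpace.comap (fun ω => (V ω, A ω, B ω)) inferInstance]
        =ᵐ[μ] fun ω => ϑa (V ω) * A ω + ϑz (V ω) * B ω + ϑaz (V ω) * A ω * B ω + ϑu (V ω)) :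
    ∫ ω, (A ω - W ω) * Y ω ∂μ
      = ∫ ω, ϑa (V ω) * (A ω * (A ω - W ω)) ∂μ + ∫ ω, ϑz (V ω) * (B ω * (A ω - W ω)) ∂μ
        + ∫ ω, ϑaz (V ω) * (B ω * A ω * (A ω - W ω)) ∂μ + ∫ ω, ϑu (V ω) * (A ω - W ω) ∂μ := by
  have hVAB := comap_measurable (m := inferInstance) fun ω => (V ω, A ω, B ω)
  have hD : MemLp (fun ω => A ω - W ω) ⊤ μ := hAb.sub hWb
  have hDi : Integrable (fun ω => A ω - W ω) μ := hD.integrable le_top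
  have h₁ : Integrable (fun ω => ϑa (V ω) * (A ω * (A ω - W ω))) μ :=
    (hDi.mul_of_top_right hAb).mul_of_top_right hϑa
  have h₂ : Integrable (fun ω => ϑz (V ω) * (B ω * (A ω - W ω))) μ :=
    (hDi.mul_of_top_right hBb).mul_of_top_right hϑz
  have h₃ : Integrable (fun ω => ϑaz (V ω) * (B ω * A ω * (A ω - W ω))) μ :=
    (hDi.mul_of_top_right (hAb.mul hBb)).mul_of_top_right hϑaz
  have h₄ : Integrable (fun ω => ϑu (V ω) * (A ω - W ω)) μ := hDi.mul_of_top_right hϑu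
  calc ∫ ω, (A ω - W ω) * Y ω ∂μ
      = ∫ ω, (A ω - W ω) * (ϑa (V ω) * A ω + ϑz (V ω) * B ω + ϑaz (V ω) * A ω * B ω
          + ϑu (V ω)) ∂μ :=
        integral_mul_eq_of_condExp_ae_eq (g := fun ω => A ω - W ω)
          (hV.prodMk (hA.prodMk hB)).comap_le
          (hVAB.snd.fst.stronglyMeasurable.sub (hW.mono hVAB.snd.snd.comap_le))
          (hY.mul_of_top_right hD) hY houtcome
    _ = ∫ ω, (ϑa (V ω) * (A ω * (A ω - W ω)) + ϑz (V ω) * (B ω * (A ω - W ω))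
          + ϑaz (V ω) * (B ω * A ω * (A ω - W ω)) + ϑu (V ω) * (A ω - W ω)) ∂μ := by
        congr with ω
        ring
    _ = _ := by
        rw [integral_add, integral_add, integral_add]
        exacts [h₁, h₂, h₁.add h₂, h₃, (h₁.add h₂).add h₃, h₄]

section TreatmentModel

variable {Ω 𝒱 : Type*} [MeasurableSpace Ω] [MeasurableSpace 𝒱]

structure IsAffineTreatmentModel (μ : Measure Ω) (V : Ω → 𝒱) (A B : Ω → ℝ)
    (αz αu : 𝒱 → ℝ) : Prop where
  measurable_V : Measurable V
  measurable_B : Measurable B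
  memLp_A : MemLp A ⊤ μ
  memLp_B : MemLp B ⊤ μ
  measurable_αz : Measurable αz
  measurable_αu : Measurable αu
  bdd_αz : ∃ C, ∀ x, |αz x| ≤ C
  bdd_αu : ∃ C, ∀ x, |αu x| ≤ C
  indepFun : IndepFun B V μ
  condExp_eq : μ[A | MeasurableSpace.comap (fun ω => (B ω, V ω)) inferInstance]
    =ᵐ[μ] fun ω => αz (V ω) * B ω + αu (V ω)

namespace IsAffineTreatmentModel

variable {μ : Measure Ω} [IsFiniteMeasure μ] {V : Ω → 𝒱} {A B : Ω → ℝ} {αz αu θ : 𝒱 → ℝ}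
  {G K : Ω → ℝ}

theorem integral_comp_mul_mul (hM : IsAffineTreatmentModel μ V A B αz αu) (hθ : Measurable θ)
    (hθb : ∃ C, ∀ x, |θ x| ≤ C)
    (hG : StronglyMeasurable[MeasurableSpace.comap B inferInstance] G) (hGi : Integrable G μ) :
    ∫ ω, θ (V ω) * G ω * A ω ∂μ
      = (∫ ω, θ (V ω) * αz (V ω) ∂μ) * (∫ ω, G ω * B ω ∂μ)
        + (∫ ω, θ (V ω) * αu (V ω) ∂μ) * ∫ ω, G ω ∂μ := by
  have hBV_B : Measurable[MeasurableSpace.comap (fun ω => (B ω, V ω)) inferInstance] B :=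
    (comap_measurable _).fst
  have hBV_V : Measurable[MeasurableSpace.comap (fun ω => (B ω, V ω)) inferInstance] V :=
    (comap_measurable _).snd
  have hθV := memLp_top_comp_of_bound (μ := μ) hM.measurable_V hθ hθb
  have hθαz := (memLp_top_comp_of_bound (μ := μ) hM.measurable_V hM.measurable_αz
    hM.bdd_αz).mul' (r := ⊤) hθV
  have hθαu := (memLp_top_comp_of_bound (μ := μ) hM.measurable_V hM.measurable_αu
    hM.bdd_αu).mul' (r := ⊤) hθV
  calc ∫ ω, θ (V ω) * G ω * A ω ∂μ
      = ∫ ω, θ (V ω) * G ω * (αz (V ω) * B ω + αu (V ω)) ∂μ :=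
        integral_mul_eq_of_condExp_ae_eq (hM.measurable_B.prodMk hM.measurable_V).comap_le
          ((hθ.comp hBV_V).stronglyMeasurable.mul (hG.mono hBV_B.comap_le))
          ((hGi.mul_of_top_right hθV).mul_of_top_left hM.memLp_A)
          (hM.memLp_A.integrable le_top) hM.condExp_eq
    _ = ∫ ω, (G ω * B ω * (θ (V ω) * αz (V ω)) + G ω * (θ (V ω) * αu (V ω))) ∂μ := by
        congr with ω
        ring
    _ = ∫ ω, G ω * B ω * (θ (V ω) * αz (V ω)) ∂μ + ∫ ω, G ω * (θ (V ω) * αu (V ω)) ∂μ :=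
        integral_add ((hGi.mul_of_top_left hM.memLp_B).mul_of_top_left hθαz)
          (hGi.mul_of_top_left hθαu)
    _ = _ := by
        rw [hM.indepFun.integral_mul_of_measurable_comap (f := fun ω => G ω * B ω)
            (g := fun ω => θ (V ω) * αz (V ω)) hM.measurable_B hM.measurable_V
            (hG.measurable.mul (comap_measurable B))
            ((hθ.mul hM.measurable_αz).comp (comap_measurable V)),
          hM.indepFun.integral_mul_of_measurable_comap (g := fun ω => θ (V ω) * αu (V ω))
            hM.measurable_B hM.measurable_V hG.measurable
            ((hθ.mul hM.measurable_αu).comp (comap_measurable V))]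
        ring

theorem integral_comp_mul_eq_add_covE (hM : IsAffineTreatmentModel μ V A B αz αu)
    (hθ : Measurable θ) (hθb : ∃ C, ∀ x, |θ x| ≤ C) {X : Ω → ℝ}
    (hG : StronglyMeasurable[MeasurableSpace.comap B inferInstance] G) (hGi : Integrable G μ)
    (hK : StronglyMeasurable[MeasurableSpace.comap B inferInstance] K) (hKi : Integrable K μ)
    (hX : ∀ ω, X ω = G ω * A ω + K ω) :
    ∫ ω, θ (V ω) * X ω ∂μ
      = (∫ ω, θ (V ω) ∂μ) * (∫ ω, X ω ∂μ)
        + covE μ (fun ω => θ (V ω)) (fun ω => αz (V ω)) * (∫ ω, G ω * B ω ∂μ)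
        + covE μ (fun ω => θ (V ω)) (fun ω => αu (V ω)) * ∫ ω, G ω ∂μ := by
  have hθV := memLp_top_comp_of_bound (μ := μ) hM.measurable_V hθ hθb
  have hGA : Integrable (fun ω => G ω * A ω) μ := hGi.mul_of_top_left hM.memLp_A
  have hθK : ∫ ω, θ (V ω) * K ω ∂μ = (∫ ω, θ (V ω) ∂μ) * ∫ ω, K ω ∂μ :=
    hM.indepFun.symm.integral_mul_of_measurable_comap hM.measurable_V hM.measurable_B
      (hθ.comp (comap_measurable V)) hK.measurable
  have hGA_eq := hM.integral_comp_mul_mul (θ := fun _ => 1) measurable_const ⟨1, by simp⟩ hG hGi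
  simp only [one_mul] at hGA_eq
  have hX_eq : ∫ ω, X ω ∂μ = ∫ ω, G ω * A ω ∂μ + ∫ ω, K ω ∂μ := by
    simp_rw [hX]
    exact integral_add hGA hKi
  have hθX_eq : ∫ ω, θ (V ω) * X ω ∂μ
      = ∫ ω, θ (V ω) * G ω * A ω ∂μ + ∫ ω, θ (V ω) * K ω ∂μ := by
    simp_rw [hX, mul_add, ← mul_assoc]
    exact integral_add ((hGi.mul_of_top_right hθV).mul_of_top_left hM.memLp_A)
      (hKi.mul_of_top_right hθV)
  rw [hθX_eq, hθK, hM.integral_comp_mul_mul hθ hθb hG hGi, hX_eq, hGA_eq]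
  simp only [covE]
  ring

theorem integral_comp_mul_mul_sub_condExp (hM : IsAffineTreatmentModel μ V A B αz αu)
    (hθ : Measurable θ) (hθb : ∃ C, ∀ x, |θ x| ≤ C)
    (hG : StronglyMeasurable[MeasurableSpace.comap B inferInstance] G) (hGb : MemLp G ⊤ μ) :
    ∫ ω, θ (V ω) * (G ω * (A ω - μ[A | MeasurableSpace.comap B inferInstance] ω)) ∂μ
      = covE μ (fun ω => θ (V ω)) (fun ω => αz (V ω)) * (∫ ω, G ω * B ω ∂μ)
        + covE μ (fun ω => θ (V ω)) (fun ω => αu (V ω)) * ∫ ω, G ω ∂μ := by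
  have hAi : Integrable A μ := hM.memLp_A.integrable le_top
  have hGW : Integrable (fun ω => G ω * μ[A | MeasurableSpace.comap B inferInstance] ω) μ :=
    integrable_condExp.mul_of_top_right hGb
  rw [hM.integral_comp_mul_eq_add_covE hθ hθb
      (K := fun ω => -(G ω * μ[A | MeasurableSpace.comap B inferInstance] ω)) hG
      (hGb.integrable le_top) (hG.mul stronglyMeasurable_condExp).neg hGW.neg
      (fun ω => by ring),
    integral_mul_sub_condExp_eq_zero hM.measurable_B.comap_le hG (hAi.mul_of_top_right hGb) hAi
      hGW]
  ring

theorem integral_comp_mul_mul_mul_sub_condExp (hM : IsAffineTreatmentModel μ V A B αz αu)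
    (hA01 : ∀ ω, A ω = 0 ∨ A ω = 1) (hθ : Measurable θ) (hθb : ∃ C, ∀ x, |θ x| ≤ C)
    (hG : StronglyMeasurable[MeasurableSpace.comap B inferInstance] G) (hGb : MemLp G ⊤ μ) :
    ∫ ω, θ (V ω) * (G ω * A ω * (A ω - μ[A | MeasurableSpace.comap B inferInstance] ω)) ∂μ
      = (∫ ω, θ (V ω) ∂μ)
          * (∫ ω, G ω * A ω * (A ω - μ[A | MeasurableSpace.comap B inferInstance] ω) ∂μ)
        + covE μ (fun ω => θ (V ω)) (fun ω => αz (V ω))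
          * (∫ ω, G ω * (1 - μ[A | MeasurableSpace.comap B inferInstance] ω) * B ω ∂μ)
        + covE μ (fun ω => θ (V ω)) (fun ω => αu (V ω))
          * ∫ ω, G ω * (1 - μ[A | MeasurableSpace.comap B inferInstance] ω) ∂μ :=
  hM.integral_comp_mul_eq_add_covE hθ hθb (K := fun _ => 0)
    (hG.mul (stronglyMeasurable_const.sub stronglyMeasurable_condExp))
    (((integrable_const 1).sub integrable_condExp).mul_of_top_right hGb)
    stronglyMeasurable_const (integrable_zero _ _ _) fun ω => by
      rcases hA01 ω with h | h <;> simp only [h] <;> ring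

end IsAffineTreatmentModel

end TreatmentModel

/-- Second intermediate identity in the proof of Lemma 6:
`E[(A − E[A|B])·Y] = E[A·(A − E[A|B])]·E[ϑ_a(V)] + E[B·A·(A − E[A|B])]·E[ϑ_az(V)]
  + Cov(α_u(V), ϑ_u(V))`. -/
theorem lemma6_second_intermediate_identity
    {Ω 𝒱 : Type*} [MeasurableSpace Ω] [MeasurableSpace 𝒱]
    (μ : Measure Ω) [IsProbabilityMeasure μ]
    (V : Ω → 𝒱) (A B : Ω → ℝ)
    (hV : Measurable V) (hA : Measurable A) (hB : Measurable B)
    (hA01 : ∀ ω, A ω = 0 ∨ A ω = 1) (hB01 : ∀ ω, B ω = 0 ∨ B ω = 1)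
    (αz αu : 𝒱 → ℝ) (hαzm : Measurable αz) (hαum : Measurable αu)
    (hαzb : ∃ C, ∀ x, |αz x| ≤ C) (hαub : ∃ C, ∀ x, |αu x| ≤ C)
    (htreat : μ[A | MeasurableSpace.comap (fun ω => (B ω, V ω)) inferInstance]
        =ᵐ[μ] fun ω => αz (V ω) * B ω + αu (V ω))
    (hindep : IndepFun B V μ)
    (Y : Ω → ℝ) (hY : Integrable Y μ)
    (ϑa ϑz ϑaz ϑu : 𝒱 → ℝ)
    (hϑam : Measurable ϑa) (hϑzm : Measurable ϑz)
    (hϑazm : Measurable ϑaz) (hϑum : Measurable ϑu)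
    (hϑab : ∃ C, ∀ x, |ϑa x| ≤ C) (hϑzb : ∃ C, ∀ x, |ϑz x| ≤ C)
    (hϑazb : ∃ C, ∀ x, |ϑaz x| ≤ C) (hϑub : ∃ C, ∀ x, |ϑu x| ≤ C)
    (houtcome : μ[Y | MeasurableSpace.comap (fun ω => (V ω, A ω, B ω)) inferInstance]
        =ᵐ[μ] fun ω => ϑa (V ω) * A ω + ϑz (V ω) * B ω + ϑaz (V ω) * A ω * B ω + ϑu (V ω))
    (horth1 : covE μ (fun x => ϑa (V x)) (fun x => αz (V x)) = 0)
    (horth2 : covE μ (fun x => ϑa (V x)) (fun x => αu (V x)) = 0)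
    (horth3 : covE μ (fun x => ϑz (V x)) (fun x => αz (V x)) = 0)
    (horth4 : covE μ (fun x => ϑz (V x)) (fun x => αu (V x)) = 0)
    (horth5 : covE μ (fun x => ϑaz (V x)) (fun x => αz (V x)) = 0)
    (horth6 : covE μ (fun x => ϑaz (V x)) (fun x => αu (V x)) = 0)
    (horth7 : covE μ (fun x => αz (V x)) (fun x => ϑu (V x)) = 0)
    :
    (∫ ω, (A ω - (μ[A | MeasurableSpace.comap B inferInstance]) ω) * Y ω ∂μ)
      = (∫ ω, A ω * (A ω - (μ[A | MeasurableSpace.comap B inferInstance]) ω) ∂μ)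
          * (∫ ω, ϑa (V ω) ∂μ)
        + (∫ ω, B ω * A ω * (A ω - (μ[A | MeasurableSpace.comap B inferInstance]) ω) ∂μ)
          * (∫ ω, ϑaz (V ω) ∂μ)
        + covE μ (fun x => αu (V x)) (fun x => ϑu (V x)) := by
  have hM : IsAffineTreatmentModel μ V A B αz αu := ⟨hV, hB, memLp_top_of_binary hA hA01,
    memLp_top_of_binary hB hB01, hαzm, hαum, hαzb, hαub, hindep, htreat⟩
  have hBm : StronglyMeasurable[MeasurableSpace.comap B inferInstance] B :=
    (comap_measurable B).stronglyMeasurable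
  have hϑa := hM.integral_comp_mul_mul_mul_sub_condExp hA01 hϑam hϑab (G := fun _ => 1)
    stronglyMeasurable_const (memLp_top_const 1)
  have hϑu := hM.integral_comp_mul_mul_sub_condExp hϑum hϑub (G := fun _ => 1)
    stronglyMeasurable_const (memLp_top_const 1)
  simp only [one_mul, integral_const, probReal_univ, smul_eq_mul] at hϑa hϑu
  rw [integral_sub_mul_eq_of_condExp_outcome hV hA hB hM.memLp_A hM.memLp_B
      (memLp_top_comp_of_bound hV hϑam hϑab) (memLp_top_comp_of_bound hV hϑzm hϑzb)
      (memLp_top_comp_of_bound hV hϑazm hϑazb) (memLp_top_comp_of_bound hV hϑum hϑub)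
      stronglyMeasurable_condExp (hM.memLp_A.condExp le_top) hY houtcome,
    hϑa, hM.integral_comp_mul_mul_sub_condExp hϑzm hϑzb hBm hM.memLp_B,
    hM.integral_comp_mul_mul_mul_sub_condExp hA01 hϑazm hϑazb hBm hM.memLp_B, hϑu,
    horth1, horth2, horth3, horth4, horth5, horth6, covE_comm μ (fun ω => ϑu (V ω)), horth7,
    covE_comm μ (fun ω => ϑu (V ω))]
  ring
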